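/- Let G be a non-abelian finite simple group and let M₁ and M₂ be distinct maximal subgroups of G, each of even order. Then d(M₁, M₂) ≤ 2 in the intersection graph Δ_G. -/

import Mathlib

/-!
Pick involutions `x ∈ M₁` and `y ∈ M₂` (Cauchy). The subgroup `⟨x, y⟩` is dihedral: both
generators invert `x * y`, so `⟨x * y⟩` is normal in it. Were `⟨x, y⟩ = G`, simplicity would
force `⟨x * y⟩` to be `1` or `G`, and either way `G` would be cyclic. Hence `⟨x, y⟩` is a
vertex of `Δ_G` meeting both `M₁` and `M₂` nontrivially, so `d(M₁, M₂) ≤ 2`.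
-/

/-- The intersection graph of a group `G`: vertices are the proper nontrivial subgroups
of `G`, with two distinct subgroups adjacent iff they intersect nontrivially. -/
def intersectionGraph (G : Type*) [Group G] :
    SimpleGraph {H : Subgroup G // H ≠ ⊥ ∧ H ≠ ⊤} where
  Adj S T := S ≠ T ∧ S.1 ⊓ T.1 ≠ ⊥
  symm := ⟨fun S T ⟨h1, h2⟩ => ⟨h1.symm, by rwa [inf_comm] at h2⟩⟩
  loopless := ⟨fun S h => h.1 rfl⟩

open Subgroup SimpleGraph

namespace intersectionGraph

variable {G : Type*} [Group G] {S T U : {H : Subgroup G // H ≠ ⊥ ∧ H ≠ ⊤}}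

lemma edist_le_one_of_inf_ne_bot (h : S.1 ⊓ T.1 ≠ ⊥) :
    (intersectionGraph G).edist S T ≤ 1 :=
  edist_le_one_iff_adj_or_eq.2 (or_iff_not_imp_right.2 fun hST => ⟨hST, h⟩)

lemma dist_le_two_of_inf_ne_bot (hSU : S.1 ⊓ U.1 ≠ ⊥) (hUT : U.1 ⊓ T.1 ≠ ⊥) :
    (intersectionGraph G).dist S T ≤ 2 := by
  have h : (intersectionGraph G).edist S T ≤ 2 :=
    calc (intersectionGraph G).edist S T
        ≤ (intersectionGraph G).edist S U + (intersectionGraph G).edist U T :=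
          SimpleGraph.edist_triangle
      _ ≤ 1 + 1 := add_le_add (edist_le_one_of_inf_ne_bot hSU) (edist_le_one_of_inf_ne_bot hUT)
      _ = 2 := one_add_one_eq_two
  exact ENat.toNat_le_of_le_natCast h

end intersectionGraph

section

variable {G : Type*} [Group G]

lemma Subgroup.ne_bot_of_mem_of_ne_one {K : Subgroup G} {g : G} (hg : g ∈ K) (hg1 : g ≠ 1) :
    K ≠ ⊥ :=
  fun hK => hg1 ((mem_bot).1 (hK ▸ hg))

lemma Subgroup.exists_mem_orderOf_eq_two_of_even_card [Finite G] {M : Subgroup G}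
    (he : Even (Nat.card M)) : ∃ x ∈ M, orderOf x = 2 := by
  obtain ⟨x, hx⟩ := exists_prime_orderOf_dvd_card' (G := M) 2 he.two_dvd
  exact ⟨x, x.2, by rwa [Subgroup.orderOf_coe]⟩

lemma mem_normalizer_zpowers_of_conj_eq_inv {g z : G} (h : g * z * g⁻¹ = z⁻¹) :
    g ∈ normalizer (zpowers z : Set G) := by
  rw [mem_normalizer_iff_map_conj_eq, MonoidHom.map_zpowers]
  simp [MulAut.conj_apply, h, zpowers_inv]

lemma zpowers_mul_normal_of_closure_pair_eq_top {x y : G} (hx : x ^ 2 = 1) (hy : y ^ 2 = 1)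
    (h : closure {x, y} = ⊤) : (zpowers (x * y)).Normal := by
  have hx' : x⁻¹ = x := inv_eq_of_mul_eq_one_left (pow_two x ▸ hx)
  have hy' : y⁻¹ = y := inv_eq_of_mul_eq_one_left (pow_two y ▸ hy)
  have hxn : x ∈ normalizer (zpowers (x * y) : Set G) :=
    mem_normalizer_zpowers_of_conj_eq_inv
      (by rw [mul_inv_rev, hx', hy', ← mul_assoc, ← pow_two, hx, one_mul])
  have hyn : y ∈ normalizer (zpowers (x * y) : Set G) :=
    mem_normalizer_zpowers_of_conj_eq_inv
      (by rw [mul_inv_rev, hx', hy', mul_assoc, mul_assoc, ← pow_two, hy, mul_one])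
  rw [← normalizer_eq_top_iff, eq_top_iff, ← h, closure_le]
  rintro g (rfl | rfl)
  exacts [hxn, hyn]

lemma IsSimpleGroup.isCyclic_of_closure_pair_eq_top [IsSimpleGroup G] {x y : G}
    (hx : x ^ 2 = 1) (hy : y ^ 2 = 1) (h : closure {x, y} = ⊤) : IsCyclic G := by
  rw [isCyclic_iff_exists_zpowers_eq_top]
  rcases (zpowers_mul_normal_of_closure_pair_eq_top hx hy h).eq_bot_or_eq_top with hbot | htop
  · have hyx : y = x :=
      (eq_inv_of_mul_eq_one_right (zpowers_eq_bot.1 hbot)).trans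
        (inv_eq_of_mul_eq_one_left (pow_two x ▸ hx))
    exact ⟨x, by rw [zpowers_eq_closure, ← h, hyx, Set.pair_eq_singleton]⟩
  · exact ⟨x * y, htop⟩

end

theorem dist_le_two_of_maximal_even_general
    (G : Type*) [Group G] [Finite G] [IsSimpleGroup G]
    (hna : ¬ ∀ a b : G, a * b = b * a)
    (M₁ M₂ : Subgroup G) (hM₁ : IsCoatom M₁) (hM₂ : IsCoatom M₂)
    (he₁ : Even (Nat.card M₁)) (he₂ : Even (Nat.card M₂)) :
    ∃ (hv₁ : M₁ ≠ ⊥ ∧ M₁ ≠ ⊤) (hv₂ : M₂ ≠ ⊥ ∧ M₂ ≠ ⊤),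
      (intersectionGraph G).dist ⟨M₁, hv₁⟩ ⟨M₂, hv₂⟩ ≤ 2 := by
  obtain ⟨x, hxM, hx⟩ := exists_mem_orderOf_eq_two_of_even_card he₁
  obtain ⟨y, hyM, hy⟩ := exists_mem_orderOf_eq_two_of_even_card he₂
  obtain ⟨hx2, hx1⟩ := orderOf_eq_prime_iff.1 hx
  obtain ⟨hy2, hy1⟩ := orderOf_eq_prime_iff.1 hy
  have hxH : x ∈ closure {x, y} := subset_closure (Set.mem_insert x {y})
  have hyH : y ∈ closure {x, y} := subset_closure (Set.mem_insert_of_mem x rfl)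
  have hH : closure {x, y} ≠ ⊤ := fun h =>
    hna (IsSimpleGroup.isCyclic_of_closure_pair_eq_top hx2 hy2 h).isMulCommutative.is_comm.comm
  let H : {H : Subgroup G // H ≠ ⊥ ∧ H ≠ ⊤} :=
    ⟨closure {x, y}, ne_bot_of_mem_of_ne_one hxH hx1, hH⟩
  refine ⟨⟨ne_bot_of_mem_of_ne_one hxM hx1, hM₁.1⟩, ⟨ne_bot_of_mem_of_ne_one hyM hy1, hM₂.1⟩,
    intersectionGraph.dist_le_two_of_inf_ne_bot (U := H) ?_ ?_⟩
  exacts [ne_bot_of_mem_of_ne_one (mem_inf.2 ⟨hxM, hxH⟩) hx1,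
    ne_bot_of_mem_of_ne_one (mem_inf.2 ⟨hyH, hyM⟩) hy1]

/-- Let `G` be a non-abelian finite simple group and let `M₁` and `M₂` be distinct maximal
subgroups of `G`, each of even order. Then `M₁` and `M₂` are vertices of the intersection
graph `Δ_G` and `d(M₁, M₂) ≤ 2`. -/
theorem dist_le_two_of_maximal_even
    (G : Type*) [Group G] [Finite G] [IsSimpleGroup G]
    (hna : ¬ ∀ a b : G, a * b = b * a)
    (M₁ M₂ : Subgroup G) (hM₁ : IsCoatom M₁) (hM₂ : IsCoatom M₂) (hne : M₁ ≠ M₂)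
    (he₁ : Even (Nat.card M₁)) (he₂ : Even (Nat.card M₂)) :
    ∃ (hv₁ : M₁ ≠ ⊥ ∧ M₁ ≠ ⊤) (hv₂ : M₂ ≠ ⊥ ∧ M₂ ≠ ⊤),
      (intersectionGraph G).dist ⟨M₁, hv₁⟩ ⟨M₂, hv₂⟩ ≤ 2 :=
  dist_le_two_of_maximal_even_general G hna M₁ M₂ hM₁ hM₂ he₁ he₂
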